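/- Existence and uniqueness of the final attributed income: let P ∈ 𝒫, E⁰ a row vector, and run E^{(n+1)} = E^{(n)} P_{S(E^{(n)})}. Then the limit E^{(∞)} = lim_n E^{(n)} exists and equals E^{(0)} · (P_{S*})^∞, where S* is the eventual stable value of S(E^{(n)}) and (P_{S*})^∞ = lim_m (P_{S*})^m. -/

import Mathlib

open Filter Matrix Topology
open scoped Classical

/-- The matrix of shares restricted on a set `S`: rows indexed by `S` are replaced by
canonical basis (row) vectors. -/
noncomputable def restrict {ι : Type*} [DecidableEq ι] (P : Matrix ι ι ℝ) (S : Set ι) :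
    Matrix ι ι ℝ :=
  fun i j => if i ∈ S then (if j = i then (1 : ℝ) else 0) else P i j

/-- `P ∈ 𝒫`: a shares matrix with corporation set `NS`. Entries in `[0,1]`, rows sum to `1`,
rows of individuals (indices outside `NS`) are canonical basis vectors, and the powers of the
corporation-to-corporation block `Q` tend to `0`. -/
def IsShares {ι : Type*} [Fintype ι] [DecidableEq ι]
    (NS : Set ι) (P : Matrix ι ι ℝ) : Prop :=
  (∀ i j, 0 ≤ P i j ∧ P i j ≤ 1) ∧
  (∀ i, ∑ j, P i j = 1) ∧
  (∀ i ∉ NS, ∀ j, P i j = if j = i then (1 : ℝ) else 0) ∧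
  Tendsto (fun n => (Matrix.of fun i j : NS => P i j) ^ n) atTop
    (𝓝 (0 : Matrix NS NS ℝ))

/-! The sets `S(E⁽ⁿ⁾)` decrease: outside `S(E)` the vector `E P_{S(E)}` only collects
nonnegative contributions, since the rows of `P_{S(E)}` at negative entries of `E` are basis
vectors. Being subsets of a finite set, they stabilise at some `S*`. The matrix `P_{S*}` is again
a shares matrix, with corporations `NS \ S*`, and listing the corporations first puts any shares
matrix in the block form `[[Q, B], [0, 1]]` with `Qᵏ → 0`, whose powers converge to
`[[0, (1 - Q)⁻¹ B], [0, 1]]`. The limit `L` of the powers of `P_{S*}` satisfies `P_S L = L` for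
every `S ⊇ S*`, so `E⁽ⁿ⁾ L = E⁰ L` for all `n`, while `E⁽ⁿ⁾ = E⁽ᴺ⁾ P_{S*}^{n-N} → E⁽ᴺ⁾ L`. -/

theorem mul_eq_of_tendsto_pow {M : Type*} [Monoid M] [TopologicalSpace M] [ContinuousMul M]
    [T2Space M] {A L : M} (hL : Tendsto (A ^ ·) atTop (𝓝 L)) : A * L = L :=
  tendsto_nhds_unique (tendsto_const_nhds.mul hL) <| by
    simpa only [Function.comp_def, pow_succ'] using hL.comp (tendsto_add_atTop_nat 1)

namespace Matrix

section Geometric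

variable {m n 𝕜 : Type*} [Fintype m] [DecidableEq m] [Field 𝕜] [TopologicalSpace 𝕜]
  [IsTopologicalRing 𝕜] [T2Space 𝕜] {Q : Matrix m m 𝕜}

theorem isUnit_one_sub_of_tendsto_pow (hQ : Tendsto (Q ^ ·) atTop (𝓝 0)) : IsUnit (1 - Q) := by
  rw [← mulVec_injective_iff_isUnit, ← coe_mulVecLin, injective_iff_map_eq_zero]
  intro v hv
  have hQv : Q *ᵥ v = v := by
    simpa [sub_mulVec, sub_eq_zero, eq_comm] using hv
  have hpow : ∀ k, (Q ^ k) *ᵥ v = v := fun k => by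
    induction k with
    | zero => simp
    | succ k ih => rw [pow_succ, ← mulVec_mulVec, hQv, ih]
  have hlim : Tendsto (fun k => (Q ^ k) *ᵥ v) atTop (𝓝 ((0 : Matrix m m 𝕜) *ᵥ v)) :=
    ((continuous_id.matrix_mulVec continuous_const).tendsto 0).comp hQ
  simp only [hpow, zero_mulVec] at hlim
  exact tendsto_nhds_unique tendsto_const_nhds hlim

theorem tendsto_sum_range_pow (hQ : Tendsto (Q ^ ·) atTop (𝓝 0)) :
    Tendsto (fun k => ∑ i ∈ Finset.range k, Q ^ i) atTop (𝓝 (1 - Q)⁻¹) := by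
  have hdet := (isUnit_iff_isUnit_det _).mp (isUnit_one_sub_of_tendsto_pow hQ)
  have hsum : ∀ k, ∑ i ∈ Finset.range k, Q ^ i = (1 - Q)⁻¹ * (1 - Q ^ k) := fun k => by
    rw [← mul_neg_geom_sum]
    exact (nonsing_inv_mul_cancel_left _ _ hdet).symm
  simp only [hsum]
  simpa using (tendsto_const_nhds (x := (1 - Q)⁻¹)).mul (tendsto_const_nhds (x := 1).sub hQ)

variable [Fintype n] [DecidableEq n]

theorem fromBlocks_zero_one_pow {R : Type*} [Semiring R] (Q : Matrix m m R) (B : Matrix m n R)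
    (k : ℕ) : fromBlocks Q B 0 (1 : Matrix n n R) ^ k =
      fromBlocks (Q ^ k) ((∑ i ∈ Finset.range k, Q ^ i) * B) 0 1 := by
  induction k with
  | zero => simp [fromBlocks_one]
  | succ k ih =>
    rw [pow_succ', ih, fromBlocks_multiply, Finset.sum_range_succ']
    simp only [pow_succ', pow_zero, Matrix.mul_zero, Matrix.zero_mul, Matrix.mul_one,
      add_zero, zero_add]
    rw [← Finset.mul_sum, Matrix.add_mul, Matrix.one_mul, Matrix.mul_assoc]

theorem tendsto_fromBlocks_zero_one_pow (B : Matrix m n 𝕜) (hQ : Tendsto (Q ^ ·) atTop (𝓝 0)) :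
    Tendsto (fun k => fromBlocks Q B 0 (1 : Matrix n n 𝕜) ^ k) atTop
      (𝓝 (fromBlocks 0 ((1 - Q)⁻¹ * B) 0 1)) := by
  simp only [fromBlocks_zero_one_pow]
  have hcont : Continuous fun X : Matrix m m 𝕜 × Matrix m m 𝕜 =>
      fromBlocks X.1 (X.2 * B) (0 : Matrix n m 𝕜) 1 :=
    continuous_fst.matrix_fromBlocks (continuous_snd.matrix_mul continuous_const)
      continuous_const continuous_const
  exact (hcont.tendsto _).comp (hQ.prodMk_nhds (tendsto_sum_range_pow hQ))

end Geometric

section Submatrix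

variable {α β R : Type*} [Fintype α] [DecidableEq α] [Fintype β] [DecidableEq β]
  [Semiring R] [LinearOrder R] [IsOrderedRing R] {A : Matrix α α R} {f : β → α}

theorem submatrix_pow_apply_le (hA : ∀ i j, 0 ≤ A i j) (hf : Function.Injective f)
    (k : ℕ) (i j : β) : (A.submatrix f f ^ k) i j ≤ (A ^ k) (f i) (f j) := by
  induction k generalizing j with
  | zero => simp [one_apply, hf.eq_iff]
  | succ k ih =>
    calc (A.submatrix f f ^ (k + 1)) i j
        ≤ ∑ l, (A ^ k) (f i) (f l) * A (f l) (f j) :=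
          Finset.sum_le_sum fun l _ => mul_le_mul_of_nonneg_right (ih l) (hA _ _)
      _ = ∑ a ∈ Finset.univ.map ⟨f, hf⟩, (A ^ k) (f i) a * A a (f j) :=
          (Finset.sum_map Finset.univ ⟨f, hf⟩ fun a => (A ^ k) (f i) a * A a (f j)).symm
      _ ≤ (A ^ (k + 1)) (f i) (f j) :=
          Finset.sum_le_univ_sum_of_nonneg fun a => mul_nonneg (pow_apply_nonneg hA k _ _) (hA _ _)

theorem tendsto_submatrix_pow [TopologicalSpace R] [OrderTopology R] (hA : ∀ i j, 0 ≤ A i j)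
    (hf : Function.Injective f) (hA0 : Tendsto (A ^ ·) atTop (𝓝 0)) :
    Tendsto (A.submatrix f f ^ ·) atTop (𝓝 0) := by
  refine tendsto_pi_nhds.mpr fun i => tendsto_pi_nhds.mpr fun j => ?_
  exact tendsto_of_tendsto_of_tendsto_of_le_of_le tendsto_const_nhds
    (tendsto_pi_nhds.mp (tendsto_pi_nhds.mp hA0 (f i)) (f j))
    (fun k => pow_apply_nonneg (fun _ _ => hA _ _) k i j)
    (fun k => submatrix_pow_apply_le hA hf k i j)

end Submatrix

end Matrix

section Shares

variable {ι : Type*} [Fintype ι] [DecidableEq ι] {NS : Set ι} {P : Matrix ι ι ℝ}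

theorem IsShares.tendsto_pow (hP : IsShares NS P) :
    ∃ L, Tendsto (fun k => P ^ k) atTop (𝓝 L) := by
  obtain ⟨-, -, hind, hQ⟩ := hP
  set e := Equiv.sumCompl (· ∈ NS)
  set B : Matrix NS {i // i ∉ NS} ℝ := of fun i j => P i j
  have hblocks : P.submatrix e e = fromBlocks (of fun i j : NS => P i j) B 0 1 := by
    ext (i | i) (j | j)
    · rfl
    · rfl
    · simpa [e, hind i i.2] using fun h : (j : ι) = i => i.2 (h ▸ j.2)
    · simp [e, hind i i.2, one_apply, Subtype.ext_iff, eq_comm]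
  have hpow : ∀ k, P ^ k = reindex e e (fromBlocks (of fun i j : NS => P i j) B 0 1 ^ k) := by
    intro k
    rw [← hblocks, ← coe_reindexAlgEquiv ℝ ℝ, map_pow, coe_reindexAlgEquiv]
    simp
  exact ⟨_, (((continuous_id.matrix_reindex e e).tendsto _).comp
    (tendsto_fromBlocks_zero_one_pow B hQ)).congr fun k => (hpow k).symm⟩

theorem IsShares.sdiff_restrict (hP : IsShares NS P) (S : Set ι) :
    IsShares (NS \ S) (restrict P S) := by
  obtain ⟨hbounds, hrows, hind, hQ⟩ := hP
  refine ⟨fun i j => ?_, fun i => ?_, fun i hi j => ?_, ?_⟩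
  · unfold restrict
    split_ifs
    exacts [⟨zero_le_one, le_rfl⟩, ⟨le_rfl, zero_le_one⟩, hbounds i j]
  · by_cases hiS : i ∈ S <;> simp [restrict, hiS, hrows]
  · by_cases hiS : i ∈ S
    · simp [restrict, hiS]
    · simp [restrict, hiS, hind i fun h => hi ⟨h, hiS⟩]
  · have hT : NS \ S ⊆ NS := Set.sdiff_subset
    have hblock : (of fun i j : ↥(NS \ S) => restrict P S i j) =
        (of fun i j : NS => P i j).submatrix (Set.inclusion hT) (Set.inclusion hT) := by
      ext i j
      simp [restrict, i.2.2]
    rw [hblock]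
    convert tendsto_submatrix_pow (A := of fun i j : NS => P i j) (fun _ _ => (hbounds _ _).1)
      (Set.inclusion_injective hT) hQ

theorem IsShares.vecMul_nonneg {T : Set ι} (hP : IsShares T P) {E : ι → ℝ}
    (hE : ∀ j ∈ T, 0 ≤ E j) {i : ι} (hi : i ∈ T) : 0 ≤ vecMul E P i := by
  obtain ⟨hbounds, -, hind, -⟩ := hP
  refine Finset.sum_nonneg fun j _ => ?_
  by_cases hj : j ∈ T
  · exact mul_nonneg (hE j hj) (hbounds j i).1
  · have hij : i ≠ j := fun h => hj (h ▸ hi)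
    simp [hind j hj, hij]

theorem restrict_mul_apply (P L : Matrix ι ι ℝ) (S : Set ι) (i j : ι) :
    (restrict P S * L) i j = if i ∈ S then L i j else (P * L) i j := by
  by_cases hi : i ∈ S <;> simp [mul_apply, restrict, hi]

theorem restrict_mul_eq_of_subset {L : Matrix ι ι ℝ} {S S' : Set ι} (hSS' : S ⊆ S')
    (h : restrict P S * L = L) : restrict P S' * L = L := by
  ext i j
  rw [restrict_mul_apply]
  split_ifs with hi
  · rfl
  · simpa [restrict_mul_apply, mt (@hSS' i) hi] using congr_fun₂ h i j

def negIncomeSet (NS : Set ι) (E : ι → ℝ) : Set ι := {i | i ∈ NS ∧ E i < 0}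

theorem IsShares.negIncomeSet_vecMul_restrict_subset (hP : IsShares NS P) (E : ι → ℝ) :
    negIncomeSet NS (vecMul E (restrict P (negIncomeSet NS E))) ⊆ negIncomeSet NS E := by
  rintro i ⟨hiNS, hneg⟩
  by_contra hi
  refine hneg.not_ge ((hP.sdiff_restrict _).vecMul_nonneg (fun j hj => ?_) ⟨hiNS, hi⟩)
  exact not_lt.mp fun h => hj.2 ⟨hj.1, h⟩

end Shares

/-- existence and uniqueness of the final attributed income: the iteration
`E^{(n+1)} = E^{(n)} · P_{S(E^{(n)})}` converges, and its limit is
`E^{(0)} · (P_{S*})^∞` where `S*` is the eventual stable value of the negative-income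
sets `S(E^{(n)})` and `(P_{S*})^∞ = lim (P_{S*})^m`. -/
theorem final_income_exists_unique {ι : Type*} [Fintype ι] [DecidableEq ι]
    (NS : Set ι) (P : Matrix ι ι ℝ) (hP : IsShares NS P)
    (E0 : ι → ℝ) (E : ℕ → ι → ℝ)
    (hE0 : E 0 = E0)
    (hstep : ∀ n, E (n + 1) = Matrix.vecMul (E n) (restrict P {i | i ∈ NS ∧ E n i < 0})) :
    ∃ (Sstar : Set ι) (N : ℕ) (Pinf : Matrix ι ι ℝ),
      (∀ n ≥ N, {i | i ∈ NS ∧ E n i < 0} = Sstar) ∧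
      Tendsto (fun n => (restrict P Sstar) ^ n) atTop (𝓝 Pinf) ∧
      Tendsto E atTop (𝓝 (Matrix.vecMul E0 Pinf)) := by
  set S : ℕ → Set ι := fun n => negIncomeSet NS (E n)
  have hstep' : ∀ n, E (n + 1) = vecMul (E n) (restrict P (S n)) := hstep
  have hanti : Antitone S := antitone_nat_of_succ_le fun n => by
    simpa only [S, hstep' n] using hP.negIncomeSet_vecMul_restrict_subset (E n)
  obtain ⟨N, hN⟩ := WellFoundedLT.antitone_chain_condition hanti
  obtain ⟨L, hL⟩ := (hP.sdiff_restrict (S N)).tendsto_pow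
  have hfix : ∀ n, restrict P (S n) * L = L := fun n =>
    restrict_mul_eq_of_subset ((le_total n N).elim (fun h => hanti h) fun h => (hN n h).le)
      (mul_eq_of_tendsto_pow hL)
  have hinv : ∀ n, vecMul (E n) L = vecMul E0 L := fun n => by
    induction n with
    | zero => rw [hE0]
    | succ n ih => rw [hstep', vecMul_vecMul, hfix n, ih]
  have htail : ∀ m, E (m + N) = vecMul (E N) (restrict P (S N) ^ m) := fun m => by
    induction m with
    | zero => simp
    | succ m ih =>
      rw [Nat.add_right_comm, hstep', ih, ← hN (m + N) (by omega), vecMul_vecMul, pow_succ]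
  refine ⟨S N, N, L, fun n hn => (hN n hn).symm, hL, ?_⟩
  rw [← hinv N, ← tendsto_add_atTop_iff_nat N]
  exact (((continuous_const.matrix_vecMul continuous_id).tendsto L).comp hL).congr
    fun m => (htail m).symm
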